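/- arXiv:2112.13689 — 3 statements merged into one kernel-verified Lean document; each statement's English description precedes it below -/
import Mathlib

section
/- Let G be a simple bipartite graph on n vertices with bipartition (X, Y) that contains no 4-cycle and has exactly ex(n, {C₃, C₄}) edges. Then any two distinct vertices lying in the same part (both in X, or both in Y) have exactly one common neighbor. -/
/-!
Two common neighbours of `u` and `v` would form a 4-cycle, so at most one exists. If there
were none, adding the edge `uv` would keep the graph free of triangles (a triangle through `uv`
has a common neighbour of `u` and `v` as third vertex) and of 4-cycles (a 4-cycle through `uv`
leaves a path of length 3 from `u` to `v`, impossible as `u` and `v` lie in the same part).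
That contradicts the extremality of the edge count.
-/

/-- A graph contains a 4-cycle: vertices `a, b, c, d` with `a ≠ c`, `b ≠ d` and
edges `ab`, `bc`, `cd`, `da` (the remaining distinctness follows from adjacency). -/
def SimpleGraph.HasC4 {V : Type*} (G : SimpleGraph V) : Prop :=
  ∃ a b c d : V, a ≠ c ∧ b ≠ d ∧ G.Adj a b ∧ G.Adj b c ∧ G.Adj c d ∧ G.Adj d a

/-- `(X, Y)` is a bipartition of the graph `G`. -/
def SimpleGraph.IsBipartitionOf {V : Type*} (G : SimpleGraph V) (X Y : Set V) : Prop :=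
  X ∪ Y = Set.univ ∧ Disjoint X Y ∧
    ∀ a b, G.Adj a b → (a ∈ X ∧ b ∈ Y) ∨ (a ∈ Y ∧ b ∈ X)

/-- `ex(n, {C₃, C₄})`: the maximum number of edges of a simple graph on `n` vertices
containing neither a triangle nor a 4-cycle as a subgraph. -/
noncomputable def exC3C4 (n : ℕ) : ℕ :=
  sSup {m : ℕ | ∃ G : SimpleGraph (Fin n),
    G.CliqueFree 3 ∧ ¬ G.HasC4 ∧ G.edgeSet.ncard = m}

/-- `z(n, C₄)`: the maximum number of edges of a simple bipartite graph on `n` vertices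
containing no 4-cycle as a subgraph. -/
noncomputable def zC4 (n : ℕ) : ℕ :=
  sSup {m : ℕ | ∃ G : SimpleGraph (Fin n), (∃ X Y, G.IsBipartitionOf X Y) ∧
    ¬ G.HasC4 ∧ G.edgeSet.ncard = m}

namespace SimpleGraph

variable {V : Type*} {G : SimpleGraph V} {X Y : Set V} {u v a b c d : V}

lemma IsBipartitionOf.eq_compl (h : G.IsBipartitionOf X Y) : Y = Xᶜ :=
  (IsCompl.compl_eq ⟨h.2.1, codisjoint_iff.mpr h.1⟩).symm

lemma IsBipartitionOf.mem_iff_not_mem_of_adj (h : G.IsBipartitionOf X Y) (hab : G.Adj a b) :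
    a ∈ X ↔ b ∉ X := by
  have hY := h.eq_compl
  rcases h.2.2 a b hab with ⟨ha, hb⟩ | ⟨ha, hb⟩ <;> simp_all

lemma IsBipartitionOf.mem_iff_of_samePart (h : G.IsBipartitionOf X Y)
    (huv : (u ∈ X ∧ v ∈ X) ∨ (u ∈ Y ∧ v ∈ Y)) : u ∈ X ↔ v ∈ X := by
  rw [h.eq_compl] at huv
  rcases huv with ⟨hu, hv⟩ | ⟨hu, hv⟩ <;> simp_all

lemma IsBipartitionOf.not_adj_of_mem_iff (h : G.IsBipartitionOf X Y) (huv : u ∈ X ↔ v ∈ X) :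
    ¬G.Adj u v := fun hadj ↦ by
  have := h.mem_iff_not_mem_of_adj hadj
  tauto

lemma IsBipartitionOf.not_adj_adj_adj_of_mem_iff (h : G.IsBipartitionOf X Y)
    (huv : u ∈ X ↔ v ∈ X) {x y : V} (hux : G.Adj u x) (hxy : G.Adj x y) : ¬G.Adj y v := by
  have := h.mem_iff_not_mem_of_adj hux
  have := h.mem_iff_not_mem_of_adj hxy
  exact h.not_adj_of_mem_iff (by tauto)

lemma IsBipartitionOf.cliqueFree_three (h : G.IsBipartitionOf X Y) : G.CliqueFree 3 :=
  have C : G.Coloring Prop := Coloring.mk (· ∈ X) fun hab ↦ by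
    simp [h.mem_iff_not_mem_of_adj hab]
  C.colorable.cliqueFree (by simp)

lemma eq_of_adj_sup_edge (h : (G ⊔ edge u v).Adj a b) (hG : ¬G.Adj a b) :
    s(a, b) = s(u, v) := by
  grind [Sym2.eq_iff]

def IsFourCycle (G : SimpleGraph V) (a b c d : V) : Prop :=
  a ≠ c ∧ b ≠ d ∧ G.Adj a b ∧ G.Adj b c ∧ G.Adj c d ∧ G.Adj d a

lemma IsFourCycle.rotate (h : G.IsFourCycle a b c d) : G.IsFourCycle b c d a :=
  ⟨h.2.1, h.1.symm, h.2.2.2.1, h.2.2.2.2.1, h.2.2.2.2.2, h.2.2.1⟩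

lemma cliqueFree_three_sup_edge (hG : G.CliqueFree 3) (huv : ∀ w, G.Adj u w → ¬G.Adj v w) :
    (G ⊔ edge u v).CliqueFree 3 := by
  classical
  have key : ∀ {a b c}, (G ⊔ edge u v).Adj a b → (G ⊔ edge u v).Adj a c →
      (G ⊔ edge u v).Adj b c → G.Adj a b := by
    intro a b c hab hac hbc
    by_contra h
    have e := eq_of_adj_sup_edge hab h
    have hac' : G.Adj a c := by
      by_contra h'
      exact hbc.ne (Sym2.congr_right.mp (e.trans (eq_of_adj_sup_edge hac h').symm))
    have hbc' : G.Adj b c := by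
      by_contra h'
      rw [Sym2.eq_swap] at e
      exact hac.ne (Sym2.congr_right.mp (e.trans (eq_of_adj_sup_edge hbc h').symm))
    rcases Sym2.eq_iff.mp e with ⟨rfl, rfl⟩ | ⟨rfl, rfl⟩
    · exact huv c hac' hbc'
    · exact huv c hbc' hac'
  intro t ht
  obtain ⟨a, b, c, hab, hac, hbc, rfl⟩ := is3Clique_iff.mp ht
  exact hG {a, b, c} (is3Clique_triple_iff.mpr
    ⟨key hab hac hbc, key hac hab hbc.symm, key hbc hab.symm hac.symm⟩)

lemma IsFourCycle.adj_of_sup_edge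
    (hpath : ∀ x y, x ≠ v → y ≠ u → G.Adj u x → G.Adj x y → G.Adj y v → False)
    (h : (G ⊔ edge u v).IsFourCycle a b c d) : G.Adj a b := by
  obtain ⟨hac, hbd, hab, hbc, hcd, hda⟩ := h
  by_contra hG
  have e := eq_of_adj_sup_edge hab hG
  have hbc' : G.Adj b c := by
    by_contra h
    rcases Sym2.eq_iff.mp ((eq_of_adj_sup_edge hbc h).trans e.symm) with ⟨h1, -⟩ | ⟨-, h2⟩
    exacts [hab.ne h1.symm, hac h2.symm]
  have hcd' : G.Adj c d := by
    by_contra h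
    rcases Sym2.eq_iff.mp ((eq_of_adj_sup_edge hcd h).trans e.symm) with ⟨h1, -⟩ | ⟨h2, -⟩
    exacts [hac h1.symm, hbc.ne h2.symm]
  have hda' : G.Adj d a := by
    by_contra h
    rcases Sym2.eq_iff.mp ((eq_of_adj_sup_edge hda h).trans e.symm) with ⟨h1, -⟩ | ⟨h2, -⟩
    exacts [hda.ne h1, hbd h2.symm]
  rcases Sym2.eq_iff.mp e with ⟨rfl, rfl⟩ | ⟨rfl, rfl⟩
  · exact hpath d c hbd.symm hac.symm hda'.symm hcd'.symm hbc'.symm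
  · exact hpath c d hac.symm hbd.symm hbc' hcd' hda'

lemma not_hasC4_sup_edge (hG : ¬G.HasC4)
    (hpath : ∀ x y, x ≠ v → y ≠ u → G.Adj u x → G.Adj x y → G.Adj y v → False) :
    ¬(G ⊔ edge u v).HasC4 := by
  intro hC4
  obtain ⟨a, b, c, d, h⟩ : ∃ a b c d, (G ⊔ edge u v).IsFourCycle a b c d := hC4
  exact hG ⟨a, b, c, d, h.1, h.2.1, h.adj_of_sup_edge hpath, h.rotate.adj_of_sup_edge hpath,
    h.rotate.rotate.adj_of_sup_edge hpath, h.rotate.rotate.rotate.adj_of_sup_edge hpath⟩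

lemma ncard_edgeSet_sup_edge [Finite V] (huv : u ≠ v) (hadj : ¬G.Adj u v) :
    (G ⊔ edge u v).edgeSet.ncard = G.edgeSet.ncard + 1 := by
  rw [edgeSet_sup, edgeSet_edge_of_ne huv, Set.union_singleton,
    Set.ncard_insert_of_notMem (show s(u, v) ∉ G.edgeSet from hadj)]

lemma ncard_edgeSet_le_exC3C4 {n : ℕ} {H : SimpleGraph (Fin n)} (h3 : H.CliqueFree 3)
    (h4 : ¬H.HasC4) : H.edgeSet.ncard ≤ exC3C4 n :=
  le_csSup ⟨Nat.card (Sym2 (Fin n)), by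
    rintro m ⟨H, -, -, rfl⟩
    exact Set.ncard_le_card _⟩ ⟨H, h3, h4, rfl⟩

lemma eq_of_adj_adj_of_not_hasC4 {w w' : V} (h4 : ¬G.HasC4) (huv : u ≠ v)
    (hw : G.Adj u w ∧ G.Adj v w) (hw' : G.Adj u w' ∧ G.Adj v w') : w' = w := by
  by_contra hne
  exact h4 ⟨u, w', v, w, huv, hne, hw'.1, hw'.2.symm, hw.2, hw.1.symm⟩

lemma exists_adj_adj_of_ncard_eq_exC3C4 {n : ℕ} {G : SimpleGraph (Fin n)} {u v : Fin n}
    (h3 : G.CliqueFree 3) (h4 : ¬G.HasC4) (hext : G.edgeSet.ncard = exC3C4 n)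
    (huv : u ≠ v) (hadj : ¬G.Adj u v)
    (hpath : ∀ x y, x ≠ v → y ≠ u → G.Adj u x → G.Adj x y → G.Adj y v → False) :
    ∃ w, G.Adj u w ∧ G.Adj v w := by
  by_contra! hno
  have := ncard_edgeSet_le_exC3C4 (cliqueFree_three_sup_edge h3 hno) (not_hasC4_sup_edge h4 hpath)
  rw [ncard_edgeSet_sup_edge huv hadj, hext] at this
  omega

end SimpleGraph

/-- If `G` is a bipartite graph on `n` vertices with bipartition `(X, Y)`, containing
no 4-cycle, and with exactly `ex(n, {C₃, C₄})` edges, then any two distinct vertices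
in the same part have exactly one common neighbor. -/
theorem statement4 {n : ℕ} (G : SimpleGraph (Fin n)) (X Y : Set (Fin n))
    (hbip : G.IsBipartitionOf X Y) (hC4 : ¬ G.HasC4)
    (hext : G.edgeSet.ncard = exC3C4 n) :
    ∀ u v : Fin n, u ≠ v → ((u ∈ X ∧ v ∈ X) ∨ (u ∈ Y ∧ v ∈ Y)) →
      ∃! w : Fin n, G.Adj u w ∧ G.Adj v w := by
  intro u v huv hsame
  have hpart := hbip.mem_iff_of_samePart hsame
  obtain ⟨w, hw⟩ := SimpleGraph.exists_adj_adj_of_ncard_eq_exC3C4 hbip.cliqueFree_three hC4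
    hext huv (hbip.not_adj_of_mem_iff hpart)
    fun _ _ _ _ hux hxy ↦ hbip.not_adj_adj_adj_of_mem_iff hpart hux hxy
  exact ⟨w, hw, fun _ hw' ↦ SimpleGraph.eq_of_adj_adj_of_not_hasC4 hC4 huv hw hw'⟩
end

section
/- Let G be a simple bipartite graph on n vertices that contains no 4-cycle and has exactly ex(n, {C₃, C₄}) edges. Then the maximum degree of G is at most three. -/
/-! Suppose some vertex `v` had four neighbours `u₀, u₁, u₂, u₃`. They lie on the side opposite
to `v`, and since `G` has no 4-cycle, `v` is the only common neighbour of any two of them.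
Delete the edges `vu₁`, `vu₂` and add the path `u₀u₁u₂u₃`. All new edges lie inside one side of
the bipartition, so a triangle or 4-cycle of the new graph must consist of a path of new edges of
length one or two together with a common old neighbour of its ends, which can only be `v`; but
every such path has an end in `{u₁, u₂}`, whose edge to `v` has been deleted. The new graph is
thus `{C₃, C₄}`-free with one edge more than `G`, contradicting `|E(G)| = ex(n, {C₃, C₄})`. -/

namespace SimpleGraph

variable {V : Type*}

theorem IsBipartitionOf.mem_left_iff_of_adj {G : SimpleGraph V} {X Y : Set V}
    (h : G.IsBipartitionOf X Y) {a b : V} (hab : G.Adj a b) : a ∈ X ↔ b ∉ X := by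
  obtain ⟨hXY, hdisj, hcross⟩ := h
  have hY : ∀ x, x ∈ Y ↔ x ∉ X := fun x =>
    ⟨fun hy hx => Set.disjoint_left.1 hdisj hx hy,
      fun hx => ((Set.mem_union x X Y).1 (hXY ▸ Set.mem_univ x)).resolve_left hx⟩
  have := hcross a b hab
  rw [hY, hY] at this
  tauto

theorem eq_of_adj_of_adj_of_not_hasC4 {G : SimpleGraph V} (hG : ¬G.HasC4) {x w y z : V}
    (hyz : y ≠ z) (hxy : G.Adj x y) (hxz : G.Adj x z) (hwy : G.Adj w y) (hwz : G.Adj w z) :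
    w = x := by
  by_contra hwx
  exact hG ⟨x, y, w, z, Ne.symm hwx, hyz, hxy, hwy.symm, hwz, hxz.symm⟩

theorem HasC4.of_map {W : Type*} {G : SimpleGraph V} (f : V ↪ W) (h : (G.map f).HasC4) :
    G.HasC4 := by
  obtain ⟨_, _, _, _, hac, hbd, hab, hbc, hcd, hda⟩ := h
  simp only [map_adj] at hab hbc hcd hda
  obtain ⟨a, b, hab, rfl, rfl⟩ := hab
  obtain ⟨b', c, hbc, hb, rfl⟩ := hbc
  obtain ⟨c', d, hcd, hc, rfl⟩ := hcd
  obtain ⟨d', a', hda, hd, ha⟩ := hda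
  rw [f.injective hb] at hbc
  rw [f.injective hc] at hcd
  rw [f.injective hd, f.injective ha] at hda
  exact ⟨a, b, c, d, ne_of_apply_ne f hac, ne_of_apply_ne f hbd, hab, hbc, hcd, hda⟩

instance (n : ℕ) : DecidableRel (pathGraph n).Adj := fun _ _ => decidable_of_iff' _ pathGraph_adj

theorem pathGraph_four_cliqueFree : (pathGraph 4).CliqueFree 3 := by
  intro s hs
  obtain ⟨a, b, c, hab, hac, hbc, -⟩ := is3Clique_iff.1 hs
  revert a b c
  decide

theorem not_hasC4_pathGraph_four : ¬(pathGraph 4).HasC4 := by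
  unfold HasC4
  decide

theorem ncard_edgeSet_pathGraph_four : (pathGraph 4).edgeSet.ncard = 3 := by
  rw [← coe_edgeFinset, Set.ncard_coe_finset]
  decide

theorem pathGraph_four_adj_interior {i j : Fin 4} (h : (pathGraph 4).Adj i j) :
    (i = 1 ∨ i = 2) ∨ (j = 1 ∨ j = 2) := by
  revert i j
  decide

theorem pathGraph_four_adj_adj_interior {i j k : Fin 4} (hij : (pathGraph 4).Adj i j)
    (hjk : (pathGraph 4).Adj j k) (hik : i ≠ k) : (i = 1 ∨ i = 2) ∨ (k = 1 ∨ k = 2) := by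
  revert i j k
  decide

section Surgery

variable {G P : SimpleGraph V} {S : Set V} {R : Set (Sym2 V)}

theorem mem_of_adj_of_notMem (hG : ∀ ⦃a b⦄, G.Adj a b → (a ∈ S ↔ b ∉ S)) {a b : V}
    (h : G.Adj a b) (ha : a ∉ S) : b ∈ S := by
  by_contra hb
  exact ha ((hG h).2 hb)

theorem adj_of_deleteEdges_sup_adj_of_notMem (hP : ∀ ⦃a b⦄, P.Adj a b → a ∈ S) {a b : V}
    (h : (G.deleteEdges R ⊔ P).Adj a b) (ha : a ∉ S) : G.Adj a b ∧ s(a, b) ∉ R := by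
  rcases h with h | h
  · exact deleteEdges_adj.1 h
  · exact absurd (hP h) ha

theorem adj_of_deleteEdges_sup_adj_of_mem_of_mem (hG : ∀ ⦃a b⦄, G.Adj a b → (a ∈ S ↔ b ∉ S))
    {a b : V} (h : (G.deleteEdges R ⊔ P).Adj a b) (ha : a ∈ S) (hb : b ∈ S) : P.Adj a b := by
  rcases h with h | h
  · exact absurd hb ((hG h.1).1 ha)
  · exact h

theorem cliqueFree_three_deleteEdges_sup (hG : ∀ ⦃a b⦄, G.Adj a b → (a ∈ S ↔ b ∉ S))
    (hP : ∀ ⦃a b⦄, P.Adj a b → a ∈ S) (hP3 : P.CliqueFree 3)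
    (hR : ∀ ⦃a b x⦄, P.Adj a b → G.Adj x a → G.Adj x b → s(x, a) ∈ R ∨ s(x, b) ∈ R) :
    (G.deleteEdges R ⊔ P).CliqueFree 3 := by
  set H := G.deleteEdges R ⊔ P
  have key : ∀ ⦃a b c⦄, H.Adj a b → H.Adj b c → H.Adj c a → c ∉ S → False := by
    intro a b c hab hbc hca hc
    obtain ⟨hca, hcaR⟩ := adj_of_deleteEdges_sup_adj_of_notMem hP hca hc
    obtain ⟨hcb, hcbR⟩ := adj_of_deleteEdges_sup_adj_of_notMem hP hbc.symm hc
    have hab := adj_of_deleteEdges_sup_adj_of_mem_of_mem hG hab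
      (mem_of_adj_of_notMem hG hca hc) (mem_of_adj_of_notMem hG hcb hc)
    exact (hR hab hca hcb).elim hcaR hcbR
  classical
  intro t ht
  obtain ⟨a, b, c, hab, hac, hbc, -⟩ := is3Clique_iff.1 ht
  by_cases habc : a ∈ S ∧ b ∈ S ∧ c ∈ S
  · obtain ⟨ha, hb, hc⟩ := habc
    refine hP3 {a, b, c} (is3Clique_iff.2 ⟨a, b, c, ?_, ?_, ?_, rfl⟩) <;>
      apply adj_of_deleteEdges_sup_adj_of_mem_of_mem hG <;> assumption
  · simp only [not_and_or] at habc
    rcases habc with ha | hb | hc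
    exacts [key hbc hac.symm hab ha, key hac.symm hab hbc hb, key hab hbc hac.symm hc]

theorem not_hasC4_deleteEdges_sup (hG : ∀ ⦃a b⦄, G.Adj a b → (a ∈ S ↔ b ∉ S))
    (hP : ∀ ⦃a b⦄, P.Adj a b → a ∈ S) (hGC4 : ¬G.HasC4) (hPC4 : ¬P.HasC4)
    (hR : ∀ ⦃a b c x⦄, P.Adj a b → P.Adj b c → a ≠ c → G.Adj x a → G.Adj x c →
      s(x, a) ∈ R ∨ s(x, c) ∈ R) :
    ¬(G.deleteEdges R ⊔ P).HasC4 := by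
  set H := G.deleteEdges R ⊔ P
  have key : ∀ ⦃a b c d⦄, a ≠ c → b ≠ d → H.Adj a b → H.Adj b c → H.Adj c d → H.Adj d a → a ∉ S →
      False := by
    intro a b c d hac hbd hab hbc hcd hda ha
    obtain ⟨hab, habR⟩ := adj_of_deleteEdges_sup_adj_of_notMem hP hab ha
    obtain ⟨had, hadR⟩ := adj_of_deleteEdges_sup_adj_of_notMem hP hda.symm ha
    have hb := mem_of_adj_of_notMem hG hab ha
    have hd := mem_of_adj_of_notMem hG had ha
    by_cases hc : c ∈ S
    · have hbc := adj_of_deleteEdges_sup_adj_of_mem_of_mem hG hbc hb hc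
      have hcd := adj_of_deleteEdges_sup_adj_of_mem_of_mem hG hcd hc hd
      exact (hR hbc hcd hbd hab had).elim habR hadR
    · obtain ⟨hcb, -⟩ := adj_of_deleteEdges_sup_adj_of_notMem hP hbc.symm hc
      obtain ⟨hcd, -⟩ := adj_of_deleteEdges_sup_adj_of_notMem hP hcd hc
      exact hGC4 ⟨a, b, c, d, hac, hbd, hab, hcb.symm, hcd, had.symm⟩
  rintro ⟨a, b, c, d, hac, hbd, hab, hbc, hcd, hda⟩
  by_cases habcd : a ∈ S ∧ b ∈ S ∧ c ∈ S ∧ d ∈ S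
  · obtain ⟨ha, hb, hc, hd⟩ := habcd
    refine hPC4 ⟨a, b, c, d, hac, hbd, ?_, ?_, ?_, ?_⟩ <;>
      apply adj_of_deleteEdges_sup_adj_of_mem_of_mem hG <;> assumption
  · simp only [not_and_or] at habcd
    rcases habcd with ha | hb | hc | hd
    exacts [key hac hbd hab hbc hcd hda ha, key hbd hac.symm hbc hcd hda hab hb,
      key hac.symm hbd.symm hcd hda hab hbc hc, key hbd.symm hac hda hab hbc hcd hd]

theorem ncard_edgeSet_deleteEdges_sup [Finite V] (hG : ∀ ⦃a b⦄, G.Adj a b → (a ∈ S ↔ b ∉ S))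
    (hP : ∀ ⦃a b⦄, P.Adj a b → a ∈ S) (hR : R ⊆ G.edgeSet) :
    (G.deleteEdges R ⊔ P).edgeSet.ncard + R.ncard = G.edgeSet.ncard + P.edgeSet.ncard := by
  have hdisj : Disjoint (G.edgeSet \ R) P.edgeSet := by
    rw [Set.disjoint_left]
    rintro ⟨a, b⟩ ⟨hab, -⟩ hab'
    exact (hG hab).1 (hP hab') (hP hab'.symm)
  rw [edgeSet_sup, edgeSet_deleteEdges, Set.ncard_union_eq hdisj, Set.ncard_sdiff hR]
  have := Set.ncard_le_ncard hR
  omega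

end Surgery

theorem exists_cliqueFree_three_not_hasC4_ncard_edgeSet_succ [Finite V] {G : SimpleGraph V}
    {S : Set V} (hG : ∀ ⦃a b⦄, G.Adj a b → (a ∈ S ↔ b ∉ S)) (hC4 : ¬G.HasC4) {v : V}
    (hv : v ∉ S) (f : Fin 4 ↪ V) (hf : ∀ i, G.Adj v (f i)) :
    ∃ H : SimpleGraph V, H.CliqueFree 3 ∧ ¬H.HasC4 ∧ H.edgeSet.ncard = G.edgeSet.ncard + 1 := by
  set P := (pathGraph 4).map f
  set R : Set (Sym2 V) := {s(v, f 1), s(v, f 2)}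
  have hP : ∀ ⦃a b⦄, P.Adj a b → a ∈ S := by
    rintro _ _ ⟨-, i, -, -, rfl, -⟩
    exact mem_of_adj_of_notMem hG (hf i) hv
  have hR : ∀ ⦃i j x⦄, i ≠ j → (i = 1 ∨ i = 2) ∨ (j = 1 ∨ j = 2) → G.Adj x (f i) →
      G.Adj x (f j) → s(x, f i) ∈ R ∨ s(x, f j) ∈ R := by
    intro i j x hij hint hxi hxj
    obtain rfl := eq_of_adj_of_adj_of_not_hasC4 hC4 (f.injective.ne hij) (hf i) (hf j) hxi hxj
    rcases hint with (rfl | rfl) | (rfl | rfl) <;> simp [R]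
  refine ⟨G.deleteEdges R ⊔ P, cliqueFree_three_deleteEdges_sup hG hP ?_ ?_,
    not_hasC4_deleteEdges_sup hG hP hC4 (fun h => not_hasC4_pathGraph_four (h.of_map f)) ?_, ?_⟩
  · exact cliqueFree_map_iff.2 pathGraph_four_cliqueFree
  · rintro _ _ x ⟨-, i, j, hij, rfl, rfl⟩
    exact hR hij.ne (pathGraph_four_adj_interior hij)
  · rintro _ _ _ x ⟨-, i, j, hij, rfl, rfl⟩ ⟨-, j', k, hjk, hj, rfl⟩ hik
    rw [f.injective hj] at hjk
    replace hik := ne_of_apply_ne f hik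
    exact hR hik (pathGraph_four_adj_adj_interior hij hjk hik)
  · have hRG : R ⊆ G.edgeSet := by
      rintro _ (rfl | rfl) <;> exact hf _
    have hR2 : R.ncard = 2 := Set.ncard_pair <| by simp [f.injective.eq_iff, (hf 2).ne]
    have hP3 : P.edgeSet.ncard = 3 := by
      rw [edgeSet_map, Set.ncard_image_of_injective _ f.sym2Map.injective,
        ncard_edgeSet_pathGraph_four]
    have := ncard_edgeSet_deleteEdges_sup hG hP hRG
    omega

end SimpleGraph

theorem Set.exists_embedding_fin_of_le_ncard {V : Type*} [Finite V] {s : Set V} {k : ℕ}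
    (h : k ≤ s.ncard) : ∃ f : Fin k ↪ V, ∀ i, f i ∈ s := by
  have := Fintype.ofFinite s
  obtain ⟨e⟩ : Nonempty (Fin k ↪ s) := Function.Embedding.nonempty_of_card_le <| by
    rwa [Fintype.card_fin, ← Nat.card_eq_fintype_card, Nat.card_coe_set_eq]
  exact ⟨e.trans (Function.Embedding.subtype _), fun i => (e i).2⟩

theorem le_exC3C4 {n : ℕ} {H : SimpleGraph (Fin n)} (h3 : H.CliqueFree 3) (h4 : ¬H.HasC4) :
    H.edgeSet.ncard ≤ exC3C4 n := by
  refine le_csSup ⟨Nat.card (Sym2 (Fin n)), ?_⟩ ⟨H, h3, h4, rfl⟩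
  rintro m ⟨H', -, -, rfl⟩
  exact Set.ncard_le_card _

/-- If `G` is a bipartite graph on `n` vertices containing no 4-cycle and with exactly
`ex(n, {C₃, C₄})` edges, then its maximum degree is at most three. -/
theorem statement5 {n : ℕ} (G : SimpleGraph (Fin n))
    (hbip : ∃ X Y : Set (Fin n), G.IsBipartitionOf X Y) (hC4 : ¬ G.HasC4)
    (hext : G.edgeSet.ncard = exC3C4 n) :
    ∀ v : Fin n, (G.neighborSet v).ncard ≤ 3 := by
  intro v
  by_contra! hdeg
  obtain ⟨X, Y, hXY⟩ := hbip
  obtain ⟨f, hf⟩ := Set.exists_embedding_fin_of_le_ncard hdeg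
  set S := {a | a ∈ X ↔ v ∉ X}
  have hS : ∀ ⦃a b⦄, G.Adj a b → (a ∈ S ↔ b ∉ S) := fun a b hab => by
    have := hXY.mem_left_iff_of_adj hab
    simp only [S, Set.mem_ofPred_eq]
    tauto
  have hv : v ∉ S := by simp [S]
  obtain ⟨H, h3, h4, hcard⟩ :=
    SimpleGraph.exists_cliqueFree_three_not_hasC4_ncard_edgeSet_succ hS hC4 hv f hf
  have := le_exC3C4 h3 h4
  omega
end

section
/- Let G be a simple bipartite graph with bipartition (X, Y) that contains no 4-cycle. Then the number of paths of length two in G (i.e., unordered pairs of distinct edges sharing an endpoint) is at most C(|X|, 2) + C(|Y|, 2), where C(m, 2) = m(m−1)/2. -/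
theorem Set.ncard_image_sym2Mk_offDiag {α : Type*} {s : Set α} (hs : s.Finite) :
    (Sym2.mk.uncurry '' s.offDiag).ncard = s.ncard.choose 2 := by
  classical
  rw [← hs.offDiag.coe_toFinset, hs.toFinset_offDiag, ← Finset.coe_image, Set.ncard_coe_finset,
    Sym2.card_image_offDiag, Set.ncard_eq_toFinset_card s hs]

namespace SimpleGraph

variable {V : Type*} {G : SimpleGraph V}

theorem eq_of_not_hasC4 (hC4 : ¬G.HasC4) {a b c d : V} (hac : a ≠ c) (hab : G.Adj a b)
    (hcb : G.Adj c b) (had : G.Adj a d) (hcd : G.Adj c d) : b = d := by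
  by_contra hbd
  exact hC4 ⟨a, b, c, d, hac, hbd, hab, hcb.symm, hcd, had.symm⟩

theorem IsBipartitionOf.mem_same_part {X Y : Set V} (hbip : G.IsBipartitionOf X Y) {a b c : V}
    (hab : G.Adj a b) (hcb : G.Adj c b) : (a ∈ X ∧ c ∈ X) ∨ (a ∈ Y ∧ c ∈ Y) := by
  obtain ⟨-, hXY, hedge⟩ := hbip
  rcases hedge a b hab with ⟨haX, hbY⟩ | ⟨haY, hbX⟩ <;>
    rcases hedge c b hcb with ⟨hcX, hbY'⟩ | ⟨hcY, hbX'⟩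
  · exact .inl ⟨haX, hcX⟩
  · exact (Set.disjoint_left.1 hXY hbX' hbY).elim
  · exact (Set.disjoint_left.1 hXY hbX hbY').elim
  · exact .inr ⟨haY, hcY⟩

variable (G) in
def pathsLengthTwo : Set (Sym2 V × V) :=
  {p | ∃ a c : V, a ≠ c ∧ p.1 = s(a, c) ∧ G.Adj a p.2 ∧ G.Adj c p.2}

theorem injOn_fst_pathsLengthTwo (hC4 : ¬G.HasC4) : Set.InjOn Prod.fst G.pathsLengthTwo := by
  rintro ⟨-, b⟩ ⟨a, c, hac, rfl, hab, hcb⟩ ⟨e, d⟩ ⟨a', c', -, rfl, ha'd, hc'd⟩ he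
  obtain ⟨had, hcd⟩ : G.Adj a d ∧ G.Adj c d := by
    rcases Sym2.eq_iff.1 he with ⟨rfl, rfl⟩ | ⟨rfl, rfl⟩
    exacts [⟨ha'd, hc'd⟩, ⟨hc'd, ha'd⟩]
  exact Prod.ext he (eq_of_not_hasC4 hC4 hac hab hcb had hcd)

theorem fst_image_pathsLengthTwo_subset {X Y : Set V} (hbip : G.IsBipartitionOf X Y) :
    Prod.fst '' G.pathsLengthTwo ⊆ Sym2.mk.uncurry '' X.offDiag ∪ Sym2.mk.uncurry '' Y.offDiag := by
  rintro - ⟨⟨-, b⟩, ⟨a, c, hac, rfl, hab, hcb⟩, rfl⟩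
  rcases hbip.mem_same_part hab hcb with ⟨haX, hcX⟩ | ⟨haY, hcY⟩
  · exact .inl ⟨(a, c), ⟨haX, hcX, hac⟩, rfl⟩
  · exact .inr ⟨(a, c), ⟨haY, hcY, hac⟩, rfl⟩

end SimpleGraph

/-- In a bipartite `C₄`-free graph with bipartition `(X, Y)`, the number of paths of
length two (counted as an unordered pair of endpoints together with the middle vertex)
is at most `C(|X|, 2) + C(|Y|, 2)`. -/
theorem statement7 {V : Type*} [Fintype V] (G : SimpleGraph V) (X Y : Set V)
    (hbip : G.IsBipartitionOf X Y) (hC4 : ¬ G.HasC4) :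
    ({p : Sym2 V × V | ∃ a c : V, a ≠ c ∧ p.1 = s(a, c) ∧
        G.Adj a p.2 ∧ G.Adj c p.2}).ncard ≤
      X.ncard * (X.ncard - 1) / 2 + Y.ncard * (Y.ncard - 1) / 2 := by
  calc G.pathsLengthTwo.ncard = (Prod.fst '' G.pathsLengthTwo).ncard :=
        (G.injOn_fst_pathsLengthTwo hC4).ncard_image.symm
    _ ≤ (Sym2.mk.uncurry '' X.offDiag ∪ Sym2.mk.uncurry '' Y.offDiag).ncard :=
        Set.ncard_le_ncard (G.fst_image_pathsLengthTwo_subset hbip) (Set.toFinite _)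
    _ ≤ (Sym2.mk.uncurry '' X.offDiag).ncard + (Sym2.mk.uncurry '' Y.offDiag).ncard :=
        Set.ncard_union_le _ _
    _ = X.ncard * (X.ncard - 1) / 2 + Y.ncard * (Y.ncard - 1) / 2 := by
        rw [Set.ncard_image_sym2Mk_offDiag X.toFinite, Set.ncard_image_sym2Mk_offDiag Y.toFinite,
          Nat.choose_two_right, Nat.choose_two_right]
end
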